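/- For every κ with 1 < κ ≤ 2 and every real number x, |1 + x|^κ ≤ 1 + κ·x + 2^{2−κ}·|x|^κ. -/

import Mathlib

/-! With `c = 2 ^ (2 - κ)`, the function `g x = 1 + κ x + c |x|^κ - |1 + x|^κ` vanishes at `0` and
has derivative `κ (1 + c φ x - φ (1 + x))`, where `φ t = |t|^(κ-2) t` is the odd power
`sign t · |t|^(κ-1)`. So it suffices that this derivative has the sign of `x`. Writing
`p = κ - 1 ∈ (0, 1]`, this follows from the subadditivity `(a + b)^p ≤ a^p + b^p` when `x ≥ -1`,
and for `x < -1` from the concavity bound `a^p + b^p ≤ 2^(1-p) (a + b)^p`, which is where the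
constant `2^(2-κ)` comes from. -/

open Real Set

lemma add_rpow_le_two_rpow_mul_rpow_add {p a b : ℝ} (hp0 : 0 ≤ p) (hp1 : p ≤ 1)
    (ha : 0 ≤ a) (hb : 0 ≤ b) : a ^ p + b ^ p ≤ 2 ^ (1 - p) * (a + b) ^ p := by
  have h := (concaveOn_rpow hp0 hp1).2 (mem_Ici.2 ha) (mem_Ici.2 hb)
    (by norm_num : (0 : ℝ) ≤ 1 / 2) (by norm_num : (0 : ℝ) ≤ 1 / 2) (by norm_num)
  have hmid : (1 / 2 : ℝ) • a + (1 / 2 : ℝ) • b = 2⁻¹ * (a + b) := by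
    simp only [smul_eq_mul]; ring
  simp only at h
  rw [hmid, mul_rpow (by norm_num) (by positivity), inv_rpow zero_le_two, smul_eq_mul,
    smul_eq_mul] at h
  rw [rpow_sub two_pos, rpow_one, div_eq_mul_inv]
  linarith

section SignedPower

variable {q t : ℝ}

lemma abs_rpow_sub_two_mul_self_of_nonneg (hq : 1 < q) (ht : 0 ≤ t) :
    |t| ^ (q - 2) * t = t ^ (q - 1) := by
  rcases ht.eq_or_lt with rfl | ht
  · rw [mul_zero, zero_rpow (by linarith)]
  · rw [abs_of_pos ht, ← rpow_add_one ht.ne']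
    ring_nf

lemma abs_rpow_sub_two_mul_self_of_nonpos (hq : 1 < q) (ht : t ≤ 0) :
    |t| ^ (q - 2) * t = -(-t) ^ (q - 1) := by
  rw [← abs_rpow_sub_two_mul_self_of_nonneg hq (neg_nonneg.2 ht), abs_neg, mul_neg, neg_neg]

lemma abs_one_add_rpow_sub_two_mul_le (hq1 : 1 < q) (hq2 : q ≤ 2) (ht : 0 ≤ t) :
    |1 + t| ^ (q - 2) * (1 + t) ≤ 1 + 2 ^ (2 - q) * (|t| ^ (q - 2) * t) := by
  rw [abs_rpow_sub_two_mul_self_of_nonneg hq1 (by linarith),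
    abs_rpow_sub_two_mul_self_of_nonneg hq1 ht]
  have hsub := rpow_add_le_add_rpow zero_le_one ht (by linarith : 0 ≤ q - 1) (by linarith)
  have hc : (1 : ℝ) ≤ 2 ^ (2 - q) := one_le_rpow one_le_two (by linarith)
  rw [one_rpow] at hsub
  nlinarith [rpow_nonneg ht (q - 1)]

lemma le_abs_one_add_rpow_sub_two_mul (hq1 : 1 < q) (hq2 : q ≤ 2) (ht : t ≤ 0) :
    1 + 2 ^ (2 - q) * (|t| ^ (q - 2) * t) ≤ |1 + t| ^ (q - 2) * (1 + t) := by
  rw [abs_rpow_sub_two_mul_self_of_nonpos hq1 ht]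
  rcases le_total 0 (1 + t) with h | h
  · rw [abs_rpow_sub_two_mul_self_of_nonneg hq1 h]
    have hsub := rpow_add_le_add_rpow h (neg_nonneg.2 ht) (by linarith : 0 ≤ q - 1) (by linarith)
    have hc : (1 : ℝ) ≤ 2 ^ (2 - q) := one_le_rpow one_le_two (by linarith)
    rw [add_neg_cancel_right, one_rpow] at hsub
    nlinarith [rpow_nonneg (neg_nonneg.2 ht) (q - 1)]
  · rw [abs_rpow_sub_two_mul_self_of_nonpos hq1 h]
    have hmean := add_rpow_le_two_rpow_mul_rpow_add (by linarith : 0 ≤ q - 1) (by linarith)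
      zero_le_one (by linarith : 0 ≤ -(1 + t))
    rw [one_rpow, show 1 - (q - 1) = 2 - q by ring, show 1 + -(1 + t) = -t by ring] at hmean
    linarith

end SignedPower

lemma apply_le_of_hasDerivAt_nonpos_of_nonneg {g g' : ℝ → ℝ} {a : ℝ}
    (hg : ∀ x, HasDerivAt g (g' x) x) (hleft : ∀ x < a, g' x ≤ 0) (hright : ∀ x > a, 0 ≤ g' x)
    (x : ℝ) : g a ≤ g x := by
  have hcont : Continuous g := continuous_iff_continuousAt.2 fun x ↦ (hg x).continuousAt
  rcases le_total a x with hax | hxa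
  · refine monotoneOn_of_hasDerivWithinAt_nonneg (convex_Ici a) hcont.continuousOn
      (fun y _ ↦ (hg y).hasDerivWithinAt) (fun y hy ↦ hright y ?_) self_mem_Ici hax hax
    simpa using hy
  · refine antitoneOn_of_hasDerivWithinAt_nonpos (convex_Iic a) hcont.continuousOn
      (fun y _ ↦ (hg y).hasDerivWithinAt) (fun y hy ↦ hleft y ?_) hxa self_mem_Iic hxa
    simpa using hy

/-- For every `κ` with `1 < κ ≤ 2` and every real `x`,
`|1 + x|^κ ≤ 1 + κ x + 2^{2−κ} |x|^κ`. -/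
theorem stmt_19 (κ x : ℝ) (hκ1 : 1 < κ) (hκ2 : κ ≤ 2) :
    |1 + x| ^ κ ≤ 1 + κ * x + (2 : ℝ) ^ ((2 : ℝ) - κ) * |x| ^ κ := by
  set c : ℝ := 2 ^ (2 - κ)
  have hderiv : ∀ y, HasDerivAt (fun y ↦ 1 + κ * y + c * |y| ^ κ - |1 + y| ^ κ)
      (κ * (1 + c * (|y| ^ (κ - 2) * y) - |1 + y| ^ (κ - 2) * (1 + y))) y := by
    intro y
    have h1 := (hasDerivAt_abs_rpow (1 + y) hκ1).comp_const_add 1 y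
    have h2 := (hasDerivAt_abs_rpow y hκ1).const_mul c
    exact (((((hasDerivAt_id' y).const_mul κ).const_add 1).add h2).sub h1).congr_deriv (by ring)
  have key := apply_le_of_hasDerivAt_nonpos_of_nonneg (a := 0) hderiv
    (fun y hy ↦ mul_nonpos_of_nonneg_of_nonpos (by linarith)
      (by linarith [le_abs_one_add_rpow_sub_two_mul hκ1 hκ2 hy.le]))
    (fun y hy ↦ mul_nonneg (by linarith)
      (by linarith [abs_one_add_rpow_sub_two_mul_le hκ1 hκ2 hy.le])) x
  simp only [mul_zero, add_zero, abs_zero, zero_rpow (by linarith : κ ≠ 0), abs_one, one_rpow,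
    sub_self] at key
  linarith
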